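/- The tensor product of two separable S-rings is separable: if S-rings 𝒜_1 over G_1 and 𝒜_2 over G_2 are each separable with respect to 𝒦_A, then the S-ring 𝒜_1 ⊗ 𝒜_2 over G_1 × G_2 is separable with respect to 𝒦_A. -/

import Mathlib

open scoped Pointwise

/-- The number of representations of `z` as `x * y` with `x ∈ X`, `y ∈ Y`
(used for the structure constants of an S-ring). -/
def structConst {G : Type*} [Group G] [DecidableEq G] (X Y : Finset G) (z : G) : ℕ :=
  ((X ×ˢ Y).filter (fun q => q.1 * q.2 = z)).card

/-- An S-ring (Schur ring) over a finite group `G`, given by its partition into basic sets: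
the partition contains `{1}`, is closed under inversion, and the products of the
characteristic sums of two blocks are integral linear combinations of characteristic sums,
i.e. the number of representations `z = x * y` (`x ∈ X`, `y ∈ Y`) is constant for `z`
ranging over a block `Z`. -/
structure SRing (G : Type*) [Group G] [Fintype G] [DecidableEq G] where
  basicSets : Finset (Finset G)
  nonempty_mem : ∀ X ∈ basicSets, X.Nonempty
  exists_mem : ∀ g : G, ∃ X ∈ basicSets, g ∈ X
  disj : ∀ X ∈ basicSets, ∀ Y ∈ basicSets, X ≠ Y → Disjoint X Y
  one_mem : ({1} : Finset G) ∈ basicSets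
  inv_mem : ∀ X ∈ basicSets, X.image (fun x => x⁻¹) ∈ basicSets
  structConst_eq : ∀ X ∈ basicSets, ∀ Y ∈ basicSets, ∀ Z ∈ basicSets,
    ∀ z ∈ Z, ∀ z' ∈ Z, structConst X Y z = structConst X Y z'

namespace SRing

variable {G G' : Type*} [Group G] [Fintype G] [DecidableEq G]
  [Group G'] [Fintype G'] [DecidableEq G']

/-- An algebraic isomorphism between S-rings: a bijection between the sets of basic sets
preserving the structure constants. -/
def IsAlgIso (A : SRing G) (B : SRing G') (φ : Finset G → Finset G') : Prop :=
  Set.BijOn φ (A.basicSets : Set (Finset G)) (B.basicSets : Set (Finset G')) ∧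
  ∀ X ∈ A.basicSets, ∀ Y ∈ A.basicSets, ∀ Z ∈ A.basicSets,
    ∀ z ∈ Z, ∀ z' ∈ φ Z, structConst X Y z = structConst (φ X) (φ Y) z'

/-- `φ` is induced by the bijection `f : G → G'` if `R(X)^f = R(X^φ)` for every basic set `X`,
where `R(X) = {(g, xg) : x ∈ X, g ∈ G}`; equivalently (for bijective `f`),
`h * g⁻¹ ∈ X ↔ f h * (f g)⁻¹ ∈ φ X` for all `g h`. -/
def Induces (A : SRing G) (B : SRing G') (φ : Finset G → Finset G') (f : G → G') : Prop :=
  Function.Bijective f ∧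
  ∀ X ∈ A.basicSets, ∀ g h : G, h * g⁻¹ ∈ X ↔ f h * (f g)⁻¹ ∈ φ X

/-- Separability with respect to the class of all finite abelian groups. -/
def SeparableA (A : SRing G) : Prop :=
  ∀ (H : Type) [CommGroup H] [Fintype H] [DecidableEq H],
    ∀ (B : SRing H) (φ : Finset G → Finset H),
      A.IsAlgIso B φ → ∃ f : G → H, A.Induces B φ f

/-- `X` is an `A`-set: a union of basic sets of `A`. -/
def IsASet (A : SRing G) (X : Finset G) : Prop :=
  ∀ Y ∈ A.basicSets, (Y ∩ X).Nonempty → Y ⊆ X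

end SRing

/-
An algebraic isomorphism `φ` from `𝒜₁ ⊗ 𝒜₂` to an S-ring `ℬ` over an abelian group `H` maps the
copies `X × 1` and `1 × Y` of the basic sets of the factors onto the basic sets of two subgroups
`K₁ = ⋃ φ(X × 1)` and `K₂ = ⋃ φ(1 × Y)` of `H`: since `φ` preserves structure constants, `ℬ`
restricted to `Kᵢ` is algebraically isomorphic to `𝒜ᵢ`. Separability of `𝒜ᵢ` yields bijections
`fᵢ : Gᵢ → Kᵢ` inducing these restricted isomorphisms. Comparing the structure constants of
`(X × 1)(1 × Y) = X × Y` shows that `H` is the internal direct product `K₁ K₂` and that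
`φ(X × Y) = φ(X × 1) φ(1 × Y)` with unique factorisations, so `(g₁, g₂) ↦ f₁ g₁ * f₂ g₂`
induces `φ`.
-/

open Finset

section StructConst

variable {G G' : Type*} [Group G] [DecidableEq G] [Group G'] [DecidableEq G']

theorem structConst_pos_iff {X Y : Finset G} {z : G} :
    0 < structConst X Y z ↔ ∃ x ∈ X, ∃ y ∈ Y, x * y = z := by
  simp only [structConst, card_pos, Finset.Nonempty, mem_filter, mem_product, Prod.exists,
    and_assoc, exists_and_left]

theorem structConst_eq_card_filter (X Y : Finset G) (z : G) :
    structConst X Y z = #{x ∈ X | x⁻¹ * z ∈ Y} := by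
  refine card_nbij' Prod.fst (fun x => (x, x⁻¹ * z)) ?_ ?_ ?_ ?_
  · rintro ⟨x, y⟩
    simp only [mem_coe, mem_filter, mem_product, and_imp]
    rintro hx hy rfl
    simpa using ⟨hx, hy⟩
  · intro x
    simp +contextual
  · rintro ⟨x, y⟩
    simp only [mem_coe, mem_filter, mem_product, and_imp]
    rintro - - rfl
    simp
  · intro x _
    rfl

theorem structConst_image {ι : G →* G'} (hι : Function.Injective ι) (X Y : Finset G) (z : G) :
    structConst (X.image ι) (Y.image ι) (ι z) = structConst X Y z := by
  rw [structConst, ← prodMap_image_product, filter_image,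
    card_image_of_injective _ (hι.prodMap hι)]
  simp only [Prod.map_fst, Prod.map_snd, ← map_mul, hι.eq_iff]
  rfl

section Subtype

variable (K : Subgroup G) [DecidablePred (· ∈ K)]

theorem image_subtype_subtype {X : Finset G} (hXK : ∀ x ∈ X, x ∈ K) :
    (X.subtype (· ∈ K)).image K.subtype = X := by
  conv_rhs => rw [← subtype_map_of_mem hXK, map_eq_image]
  rfl

theorem structConst_subtype {X Y : Finset G} (hXK : ∀ x ∈ X, x ∈ K) (hYK : ∀ y ∈ Y, y ∈ K)
    (z : K) : structConst (X.subtype (· ∈ K)) (Y.subtype (· ∈ K)) z = structConst X Y z := by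
  rw [← structConst_image K.subtype_injective, image_subtype_subtype K hXK,
    image_subtype_subtype K hYK]
  rfl

end Subtype

end StructConst

theorem image_inl {G₁ G₂ : Type*} [Group G₁] [DecidableEq G₁] [Group G₂] [DecidableEq G₂]
    (X : Finset G₁) : X.image (MonoidHom.inl G₁ G₂) = X ×ˢ {1} := by
  ext ⟨a, b⟩
  simp [eq_comm]

theorem image_inr {G₁ G₂ : Type*} [Group G₁] [DecidableEq G₁] [Group G₂] [DecidableEq G₂]
    (Y : Finset G₂) : Y.image (MonoidHom.inr G₁ G₂) = {1} ×ˢ Y := by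
  ext ⟨a, b⟩
  simp [eq_comm]

namespace SRing

section Basic

variable {G G' : Type*} [Group G] [Fintype G] [DecidableEq G]
  [Group G'] [Fintype G'] [DecidableEq G']

theorem eq_of_mem_of_mem (A : SRing G) {X Y : Finset G} (hX : X ∈ A.basicSets)
    (hY : Y ∈ A.basicSets) {g : G} (hgX : g ∈ X) (hgY : g ∈ Y) : X = Y := by
  by_contra h
  exact disjoint_left.1 (A.disj X hX Y hY h) hgX hgY

theorem sum_structConst (A : SRing G) (X : Finset G) (z : G) :
    ∑ Y ∈ A.basicSets, structConst X Y z = #X := by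
  simp_rw [structConst_eq_card_filter]
  rw [← card_biUnion]
  · congr 1
    ext x
    simp only [mem_biUnion, mem_filter]
    constructor
    · rintro ⟨-, -, hx, -⟩
      exact hx
    · intro hx
      obtain ⟨Y, hY, hxY⟩ := A.exists_mem (x⁻¹ * z)
      exact ⟨Y, hY, hx, hxY⟩
  · intro Y hY Y' hY' hne
    exact disjoint_filter.2 fun x _ hxY hxY' => hne (A.eq_of_mem_of_mem hY hY' hxY hxY')

variable {A : SRing G} {B : SRing G'} {φ : Finset G → Finset G'}

theorem IsAlgIso.map_mem (hφ : A.IsAlgIso B φ) {X : Finset G} (hX : X ∈ A.basicSets) :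
    φ X ∈ B.basicSets :=
  hφ.1.1 hX

theorem IsAlgIso.exists_mem (hφ : A.IsAlgIso B φ) (w : G') : ∃ W ∈ A.basicSets, w ∈ φ W := by
  obtain ⟨Z, hZ, hwZ⟩ := B.exists_mem w
  obtain ⟨W, hW, rfl⟩ := hφ.1.2.2 hZ
  exact ⟨W, hW, hwZ⟩

theorem IsAlgIso.exists_mul_eq_iff (hφ : A.IsAlgIso B φ) {X Y W : Finset G}
    (hX : X ∈ A.basicSets) (hY : Y ∈ A.basicSets) (hW : W ∈ A.basicSets) {w : G} {w' : G'}
    (hw : w ∈ W) (hw' : w' ∈ φ W) :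
    (∃ u ∈ φ X, ∃ v ∈ φ Y, u * v = w') ↔ ∃ x ∈ X, ∃ y ∈ Y, x * y = w := by
  rw [← structConst_pos_iff, ← structConst_pos_iff, hφ.2 X hX Y hY W hW w hw w' hw']

theorem IsAlgIso.card_apply (hφ : A.IsAlgIso B φ) {X : Finset G} (hX : X ∈ A.basicSets) :
    #(φ X) = #X := by
  obtain ⟨Z, hZ, h1Z⟩ := hφ.exists_mem 1
  obtain ⟨z, hz⟩ := A.nonempty_mem Z hZ
  calc #(φ X) = ∑ Y' ∈ B.basicSets, structConst (φ X) Y' 1 := (B.sum_structConst _ _).symm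
    _ = ∑ Y ∈ A.basicSets, structConst X Y z :=
      (sum_nbij φ (fun _ hY => hφ.map_mem hY) hφ.1.2.1 hφ.1.2.2
        fun Y hY => hφ.2 X hX Y hY Z hZ z hz 1 h1Z).symm
    _ = #X := A.sum_structConst X z

theorem IsAlgIso.apply_one (hφ : A.IsAlgIso B φ) : φ {1} = {1} := by
  obtain ⟨b, hb⟩ := card_eq_one.1 ((hφ.card_apply A.one_mem).trans (card_singleton 1))
  obtain ⟨u, hu, v, hv, huv⟩ := (hφ.exists_mul_eq_iff A.one_mem A.one_mem A.one_mem
    (mem_singleton_self 1) (hb ▸ mem_singleton_self b)).2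
    ⟨1, mem_singleton_self 1, 1, mem_singleton_self 1, one_mul 1⟩
  rw [hb, mem_singleton] at hu hv
  subst hu hv
  rw [hb, mul_eq_right.1 huv]

theorem IsAlgIso.apply_inv (hφ : A.IsAlgIso B φ) {X : Finset G} (hX : X ∈ A.basicSets) :
    φ X⁻¹ = (φ X)⁻¹ := by
  obtain ⟨x, hx⟩ := A.nonempty_mem X hX
  have h1 : (1 : G') ∈ φ {1} := by
    rw [hφ.apply_one]
    exact mem_singleton_self 1
  obtain ⟨u, hu, v, hv, huv⟩ := (hφ.exists_mul_eq_iff hX (A.inv_mem X hX) A.one_mem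
    (mem_singleton_self 1) h1).2 ⟨x, hx, x⁻¹, inv_mem_inv hx, mul_inv_cancel x⟩
  refine B.eq_of_mem_of_mem (hφ.map_mem (A.inv_mem X hX)) (B.inv_mem _ (hφ.map_mem hX)) hv ?_
  rw [eq_inv_of_mul_eq_one_right huv]
  exact inv_mem_inv hu

end Basic

section Restrict

variable {H : Type*} [Group H] [Fintype H] [DecidableEq H]

def IsASubgroup (B : SRing H) (K : Subgroup H) : Prop :=
  ∀ X ∈ B.basicSets, ∀ x ∈ X, x ∈ K → ∀ y ∈ X, y ∈ K

def restrict (B : SRing H) (K : Subgroup H) [DecidablePred (· ∈ K)] (hK : B.IsASubgroup K) :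
    SRing K where
  basicSets := {X ∈ B.basicSets | ∀ x ∈ X, x ∈ K}.image (Finset.subtype (· ∈ K))
  nonempty_mem := by
    simp only [mem_image, mem_filter]
    rintro _ ⟨X, ⟨hX, hXK⟩, rfl⟩
    obtain ⟨x, hx⟩ := B.nonempty_mem X hX
    exact ⟨⟨x, hXK x hx⟩, mem_subtype.2 hx⟩
  exists_mem := by
    intro k
    obtain ⟨X, hX, hk⟩ := B.exists_mem k
    exact ⟨_, mem_image_of_mem _ (mem_filter.2 ⟨hX, hK X hX k hk k.2⟩), mem_subtype.2 hk⟩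
  disj := by
    simp only [mem_image, mem_filter]
    rintro _ ⟨X, ⟨hX, -⟩, rfl⟩ _ ⟨Y, ⟨hY, -⟩, rfl⟩ hne
    refine disjoint_left.2 fun k hkX hkY => hne ?_
    rw [B.eq_of_mem_of_mem hX hY (mem_subtype.1 hkX) (mem_subtype.1 hkY)]
  one_mem := by
    refine mem_image.2 ⟨{1}, mem_filter.2 ⟨B.one_mem, by simp⟩, ?_⟩
    ext k
    simp only [mem_subtype, mem_singleton, OneMemClass.coe_eq_one]
  inv_mem := by
    simp only [mem_image, mem_filter]
    rintro _ ⟨X, ⟨hX, hXK⟩, rfl⟩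
    refine ⟨X⁻¹, ⟨B.inv_mem X hX, fun x hx => inv_mem_iff.1 (hXK _ (mem_inv'.1 hx))⟩, ?_⟩
    ext k
    simp only [mem_subtype, image_inv_eq_inv, mem_inv']
    rfl
  structConst_eq := by
    simp only [mem_image, mem_filter]
    rintro _ ⟨X, ⟨hX, hXK⟩, rfl⟩ _ ⟨Y, ⟨hY, hYK⟩, rfl⟩ _ ⟨Z, ⟨hZ, -⟩, rfl⟩ z hz z' hz'
    rw [structConst_subtype K hXK hYK, structConst_subtype K hXK hYK]
    exact B.structConst_eq X hX Y hY Z hZ z (mem_subtype.1 hz) z' (mem_subtype.1 hz')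

theorem mem_restrict_basicSets {B : SRing H} {K : Subgroup H} [DecidablePred (· ∈ K)]
    {hK : B.IsASubgroup K} {S : Finset K} :
    S ∈ (B.restrict K hK).basicSets ↔
      ∃ X ∈ B.basicSets, (∀ x ∈ X, x ∈ K) ∧ X.subtype (· ∈ K) = S := by
  simp only [restrict, mem_image, mem_filter, and_assoc]

end Restrict

section Restriction

variable {G G₀ H : Type*} [Group G] [Fintype G] [DecidableEq G]
  [Group G₀] [Fintype G₀] [DecidableEq G₀] [Group H] [Fintype H] [DecidableEq H]

/-- `A` is a copy, transported along `ι`, of the restriction of `T` to the `T`-subgroup `ι(G)`. -/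
structure IsRestriction (T : SRing G₀) (A : SRing G) (ι : G →* G₀) : Prop where
  injective : Function.Injective ι
  image_mem : ∀ X ∈ A.basicSets, X.image ι ∈ T.basicSets
  exists_image_eq : ∀ W ∈ T.basicSets, ∀ g : G, ι g ∈ W → ∃ X ∈ A.basicSets, X.image ι = W

variable {A : SRing G} {T : SRing G₀} {B : SRing H} {ι : G →* G₀}
  {φ : Finset G₀ → Finset H}

def IsAlgIso.imageSubgroup (hφ : T.IsAlgIso B φ) (hA : T.IsRestriction A ι) : Subgroup H where
  carrier := {u | ∃ X ∈ A.basicSets, u ∈ φ (X.image ι)}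
  one_mem' := ⟨{1}, A.one_mem, by
    rw [image_singleton, _root_.map_one, hφ.apply_one]
    exact mem_singleton_self 1⟩
  mul_mem' := by
    rintro u v ⟨X, hX, hu⟩ ⟨Y, hY, hv⟩
    obtain ⟨W, hW, huv⟩ := hφ.exists_mem (u * v)
    obtain ⟨w, hw⟩ := T.nonempty_mem W hW
    obtain ⟨_, hx, _, hy, hxy⟩ :=
      (hφ.exists_mul_eq_iff (hA.image_mem X hX) (hA.image_mem Y hY) hW hw huv).1 ⟨u, hu, v, hv, rfl⟩
    obtain ⟨x, -, rfl⟩ := mem_image.1 hx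
    obtain ⟨y, -, rfl⟩ := mem_image.1 hy
    obtain ⟨Z, hZ, rfl⟩ := hA.exists_image_eq W hW (x * y) (by rwa [_root_.map_mul, hxy])
    exact ⟨Z, hZ, huv⟩
  inv_mem' := by
    rintro u ⟨X, hX, hu⟩
    refine ⟨X⁻¹, A.inv_mem X hX, ?_⟩
    rw [image_inv, hφ.apply_inv (hA.image_mem X hX)]
    exact inv_mem_inv hu

variable (hφ : T.IsAlgIso B φ) (hA : T.IsRestriction A ι) {K : Subgroup H}
  (hK : ∀ u, u ∈ K ↔ ∃ X ∈ A.basicSets, u ∈ φ (X.image ι))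
include hφ hA hK

theorem IsAlgIso.isASubgroup : B.IsASubgroup K := by
  intro W hW w hwW hwK u huW
  obtain ⟨X, hX, hwX⟩ := (hK w).1 hwK
  rw [B.eq_of_mem_of_mem hW (hφ.map_mem (hA.image_mem X hX)) hwW hwX] at huW
  exact (hK u).2 ⟨X, hX, huW⟩

theorem IsAlgIso.isAlgIso_restrict [DecidablePred (· ∈ K)] :
    A.IsAlgIso (B.restrict K (hφ.isASubgroup hA hK))
      (fun X => (φ (X.image ι)).subtype (· ∈ K)) := by
  have hmem := hA.image_mem
  have hsub : ∀ X ∈ A.basicSets, ∀ u ∈ φ (X.image ι), u ∈ K :=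
    fun X hX u hu => (hK u).2 ⟨X, hX, hu⟩
  refine ⟨⟨?_, ?_, ?_⟩, ?_⟩
  · intro X hX
    exact mem_restrict_basicSets.2 ⟨_, hφ.map_mem (hmem X hX), hsub X hX, rfl⟩
  · intro X hX Y hY hXY
    have h := congrArg (Finset.image K.subtype) hXY
    simp only [image_subtype_subtype K (hsub X hX), image_subtype_subtype K (hsub Y hY)] at h
    exact image_injective hA.injective (hφ.1.2.1 (hmem X hX) (hmem Y hY) h)
  · intro S hS
    obtain ⟨V, hV, hVK, rfl⟩ := mem_restrict_basicSets.1 hS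
    obtain ⟨v, hv⟩ := B.nonempty_mem V hV
    obtain ⟨X, hX, hvX⟩ := (hK v).1 (hVK v hv)
    exact ⟨X, hX, by rw [B.eq_of_mem_of_mem hV (hφ.map_mem (hmem X hX)) hv hvX]⟩
  · intro X hX Y hY Z hZ z hz w hw
    dsimp only
    rw [structConst_subtype K (hsub X hX) (hsub Y hY),
      ← hφ.2 _ (hmem X hX) _ (hmem Y hY) _ (hmem Z hZ) (ι z) (mem_image_of_mem ι hz) w
        (mem_subtype.1 hw), structConst_image hA.injective]

end Restriction

theorem IsAlgIso.exists_induced_of_isRestriction {G G₀ : Type*} [Group G] [Fintype G]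
    [DecidableEq G] [Group G₀] [Fintype G₀] [DecidableEq G₀]
    {H : Type} [CommGroup H] [Fintype H] [DecidableEq H]
    {A : SRing G} {T : SRing G₀} {B : SRing H} {ι : G →* G₀} {φ : Finset G₀ → Finset H}
    (hφ : T.IsAlgIso B φ) (hA : T.IsRestriction A ι) (hsep : A.SeparableA) :
    ∃ f : G → hφ.imageSubgroup hA, Function.Bijective f ∧
      ∀ X ∈ A.basicSets, ∀ g h : G, h * g⁻¹ ∈ X ↔ (f h : H) * (f g : H)⁻¹ ∈ φ (X.image ι) := by
  classical
  obtain ⟨f, hf, hind⟩ :=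
    hsep _ _ _ (hφ.isAlgIso_restrict hA (K := hφ.imageSubgroup hA) fun _ => Iff.rfl)
  refine ⟨f, hf, fun X hX g h => ?_⟩
  rw [hind X hX g h, mem_subtype]
  rfl

section Tensor

variable {G₁ G₂ : Type*} [Group G₁] [Fintype G₁] [DecidableEq G₁]
  [Group G₂] [Fintype G₂] [DecidableEq G₂]
  {A₁ : SRing G₁} {A₂ : SRing G₂} {T : SRing (G₁ × G₂)}
  (hT : T.basicSets = (A₁.basicSets ×ˢ A₂.basicSets).image (fun q => q.1 ×ˢ q.2))
include hT

theorem mem_tensor_basicSets {W : Finset (G₁ × G₂)} :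
    W ∈ T.basicSets ↔ ∃ X ∈ A₁.basicSets, ∃ Y ∈ A₂.basicSets, X ×ˢ Y = W := by
  rw [hT]
  simp only [mem_image, mem_product, Prod.exists, and_assoc, exists_and_left]

theorem isRestriction_inl : T.IsRestriction A₁ (MonoidHom.inl G₁ G₂) := by
  refine ⟨fun _ _ h => congrArg Prod.fst h, fun X hX => ?_, fun W hW g hg => ?_⟩
  · rw [image_inl]
    exact (mem_tensor_basicSets hT).2 ⟨X, hX, {1}, A₂.one_mem, rfl⟩
  · obtain ⟨X, hX, Y, hY, rfl⟩ := (mem_tensor_basicSets hT).1 hW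
    have hY1 : Y = {1} :=
      A₂.eq_of_mem_of_mem hY A₂.one_mem (mem_product.1 hg).2 (mem_singleton_self 1)
    exact ⟨X, hX, by rw [image_inl, hY1]⟩

theorem isRestriction_inr : T.IsRestriction A₂ (MonoidHom.inr G₁ G₂) := by
  refine ⟨fun _ _ h => congrArg Prod.snd h, fun Y hY => ?_, fun W hW g hg => ?_⟩
  · rw [image_inr]
    exact (mem_tensor_basicSets hT).2 ⟨{1}, A₁.one_mem, Y, hY, rfl⟩
  · obtain ⟨X, hX, Y, hY, rfl⟩ := (mem_tensor_basicSets hT).1 hW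
    have hX1 : X = {1} :=
      A₁.eq_of_mem_of_mem hX A₁.one_mem (mem_product.1 hg).1 (mem_singleton_self 1)
    exact ⟨Y, hY, by rw [image_inr, hX1]⟩

variable {H : Type*} [CommGroup H] [Fintype H] [DecidableEq H] {B : SRing H}
  {φ : Finset (G₁ × G₂) → Finset H} (hφ : T.IsAlgIso B φ)
include hφ

theorem exists_mul_eq_of_mem_tensor {X : Finset G₁} {Y : Finset G₂} (hX : X ∈ A₁.basicSets)
    (hY : Y ∈ A₂.basicSets) {w : H} (hw : w ∈ φ (X ×ˢ Y)) :
    ∃ u ∈ φ (X.image (MonoidHom.inl G₁ G₂)), ∃ v ∈ φ (Y.image (MonoidHom.inr G₁ G₂)),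
      u * v = w := by
  obtain ⟨x, hx⟩ := A₁.nonempty_mem X hX
  obtain ⟨y, hy⟩ := A₂.nonempty_mem Y hY
  refine (hφ.exists_mul_eq_iff ((isRestriction_inl hT).image_mem X hX)
    ((isRestriction_inr hT).image_mem Y hY) ((mem_tensor_basicSets hT).2 ⟨X, hX, Y, hY, rfl⟩)
    (mem_product.2 ⟨hx, hy⟩ : (x, y) ∈ X ×ˢ Y) hw).2
    ⟨_, mem_image_of_mem _ hx, _, mem_image_of_mem _ hy, ?_⟩
  simp

theorem mul_mem_tensor {X : Finset G₁} {Y : Finset G₂} (hX : X ∈ A₁.basicSets)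
    (hY : Y ∈ A₂.basicSets) {u v : H} (hu : u ∈ φ (X.image (MonoidHom.inl G₁ G₂)))
    (hv : v ∈ φ (Y.image (MonoidHom.inr G₁ G₂))) : u * v ∈ φ (X ×ˢ Y) := by
  obtain ⟨W, hW, huv⟩ := hφ.exists_mem (u * v)
  obtain ⟨X', hX', Y', hY', rfl⟩ := (mem_tensor_basicSets hT).1 hW
  obtain ⟨x', hx'⟩ := A₁.nonempty_mem X' hX'
  obtain ⟨y', hy'⟩ := A₂.nonempty_mem Y' hY'
  obtain ⟨_, ha, _, hb, hab⟩ := (hφ.exists_mul_eq_iff ((isRestriction_inl hT).image_mem X hX)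
    ((isRestriction_inr hT).image_mem Y hY) hW
    (mem_product.2 ⟨hx', hy'⟩ : (x', y') ∈ X' ×ˢ Y') huv).1 ⟨u, hu, v, hv, rfl⟩
  obtain ⟨x, hx, rfl⟩ := mem_image.1 ha
  obtain ⟨y, hy, rfl⟩ := mem_image.1 hb
  simp only [MonoidHom.inl_apply, MonoidHom.inr_apply, Prod.mk_mul_mk, mul_one, one_mul,
    Prod.mk.injEq] at hab
  obtain ⟨rfl, rfl⟩ := hab
  rwa [A₁.eq_of_mem_of_mem hX hX' hx hx', A₂.eq_of_mem_of_mem hY hY' hy hy']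

theorem isComplement'_imageSubgroup :
    (hφ.imageSubgroup (isRestriction_inl hT)).IsComplement'
      (hφ.imageSubgroup (isRestriction_inr hT)) := by
  refine Subgroup.isComplement'_of_disjoint_and_mul_eq_univ ?_ ?_
  · rw [Subgroup.disjoint_def]
    rintro u ⟨X, hX, huX⟩ ⟨Y, hY, huY⟩
    have hX₀ := (isRestriction_inl hT).image_mem X hX
    have hY₀ := (isRestriction_inr hT).image_mem Y hY
    have hXY := hφ.1.2.1 hX₀ hY₀
      (B.eq_of_mem_of_mem (hφ.map_mem hX₀) (hφ.map_mem hY₀) huX huY)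
    -- `X × 1 = 1 × Y` forces `X = {1}`
    obtain ⟨x, hx⟩ := A₁.nonempty_mem X hX
    obtain ⟨y, -, hyx⟩ := mem_image.1 (hXY ▸ mem_image_of_mem (MonoidHom.inl G₁ G₂) hx)
    have hx1 : x = 1 := by simpa using (congrArg Prod.fst hyx).symm
    rw [A₁.eq_of_mem_of_mem hX A₁.one_mem (hx1 ▸ hx) (mem_singleton_self 1), image_singleton,
      map_one, hφ.apply_one] at huX
    exact mem_singleton.1 huX
  · refine Set.eq_univ_of_forall fun w => ?_
    obtain ⟨W, hW, hw⟩ := hφ.exists_mem w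
    obtain ⟨X, hX, Y, hY, rfl⟩ := (mem_tensor_basicSets hT).1 hW
    obtain ⟨u, hu, v, hv, rfl⟩ := exists_mul_eq_of_mem_tensor hT hφ hX hY hw
    exact Set.mul_mem_mul ⟨X, hX, hu⟩ ⟨Y, hY, hv⟩

theorem mul_mem_tensor_iff {X : Finset G₁} {Y : Finset G₂} (hX : X ∈ A₁.basicSets)
    (hY : Y ∈ A₂.basicSets) {u v : H} (hu : u ∈ hφ.imageSubgroup (isRestriction_inl hT))
    (hv : v ∈ hφ.imageSubgroup (isRestriction_inr hT)) :
    u * v ∈ φ (X ×ˢ Y) ↔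
      u ∈ φ (X.image (MonoidHom.inl G₁ G₂)) ∧ v ∈ φ (Y.image (MonoidHom.inr G₁ G₂)) := by
  refine ⟨fun huv => ?_, fun ⟨hu', hv'⟩ => mul_mem_tensor hT hφ hX hY hu' hv'⟩
  obtain ⟨u', hu', v', hv', huv'⟩ := exists_mul_eq_of_mem_tensor hT hφ hX hY huv
  have h := (isComplement'_imageSubgroup hT hφ).1
    (a₁ := (⟨u', X, hX, hu'⟩, ⟨v', Y, hY, hv'⟩)) (a₂ := (⟨u, hu⟩, ⟨v, hv⟩)) huv'
  simp only [Prod.mk.injEq, Subtype.ext_iff] at h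
  obtain ⟨rfl, rfl⟩ := h
  exact ⟨hu', hv'⟩

end Tensor

end SRing

/-- The tensor product of two S-rings that are separable with respect to the class of all
finite abelian groups is again separable with respect to that class. -/
theorem stmt10 (G₁ G₂ : Type) [Group G₁] [Fintype G₁] [DecidableEq G₁]
    [Group G₂] [Fintype G₂] [DecidableEq G₂]
    (A₁ : SRing G₁) (A₂ : SRing G₂)
    (h₁ : A₁.SeparableA) (h₂ : A₂.SeparableA)
    (T : SRing (G₁ × G₂))
    (hT : T.basicSets =
      (A₁.basicSets ×ˢ A₂.basicSets).image (fun q => q.1 ×ˢ q.2)) :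
    T.SeparableA := by
  intro H _ _ _ B φ hφ
  obtain ⟨f₁, hf₁, hind₁⟩ := hφ.exists_induced_of_isRestriction (SRing.isRestriction_inl hT) h₁
  obtain ⟨f₂, hf₂, hind₂⟩ := hφ.exists_induced_of_isRestriction (SRing.isRestriction_inr hT) h₂
  refine ⟨fun g => f₁ g.1 * f₂ g.2,
    (SRing.isComplement'_imageSubgroup hT hφ).comp (hf₁.prodMap hf₂), fun W hW g h => ?_⟩
  obtain ⟨X, hX, Y, hY, rfl⟩ := (SRing.mem_tensor_basicSets hT).1 hW
  rw [mul_inv, mul_mul_mul_comm, SRing.mul_mem_tensor_iff hT hφ hX hY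
    (mul_mem (f₁ h.1).2 (inv_mem (f₁ g.1).2)) (mul_mem (f₂ h.2).2 (inv_mem (f₂ g.2).2)),
    ← hind₁ X hX, ← hind₂ Y hY]
  exact mem_product
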